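/- Let U ⊆ ℝ^d be open and let χ : U → H be twice continuously (Fréchet) differentiable. Define g(x, y) := (Ψ(χ(y)))(x) = 1 − exp(−∫₀ˣ (ι(χ(y)))(s) ds) for x ≥ 0, y ∈ U. Then: (i) g is jointly continuous on ℝ≥0 × U; (ii) for each fixed y ∈ U, x ↦ g(x, y) is continuously differentiable with ∂_x g(x, y) = (ι(χ(y)))(x) · (1 − g(x, y)), and (x, y) ↦ ∂_x g(x, y) is jointly continuous; (iii) for each fixed x ≥ 0, y ↦ g(x, y) is twice continuously differentiable on U. -/

import Mathlib

/-!
By the uniform boundedness principle the strongly continuous family `S h` is uniformly bounded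
for `h` in compact sets, so `(h, f) ↦ S h f` is jointly continuous, and so is
`(h, f) ↦ (ι f)(h) = (ι (S h f))(0)`. Parts (i) and (ii) follow from continuity of parametric
integrals and the fundamental theorem of calculus. For (iii), `f ↦ ∫₀ˣ (ι f)(s) ds` is a continuous
linear functional on `H`, so `y ↦ g(x, y)` is a smooth function of `χ y`.
-/

open scoped NNReal
open Filter Topology

section StronglyContinuousFamily

variable {T E F : Type*} [TopologicalSpace T]
  [NormedAddCommGroup E] [NormedSpace ℝ E] [CompleteSpace E]
  [NormedAddCommGroup F] [NormedSpace ℝ F] {S : T → E →L[ℝ] F}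

theorem IsCompact.exists_bound_opNorm_of_continuous_apply
    (hS : ∀ f, Continuous fun t => S t f) {K : Set T} (hK : IsCompact K) :
    ∃ M, ∀ t ∈ K, ‖S t‖ ≤ M := by
  have hpt : ∀ f : E, ∃ C, ∀ t : K, ‖S t f‖ ≤ C := fun f => by
    obtain ⟨C, hC⟩ := hK.exists_bound_of_continuousOn (hS f).continuousOn
    exact ⟨C, fun t => hC t t.2⟩
  obtain ⟨M, hM⟩ := banach_steinhaus hpt
  exact ⟨M, fun t ht => hM ⟨t, ht⟩⟩

theorem continuous_uncurry_of_continuous_apply [WeaklyLocallyCompactSpace T]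
    (hS : ∀ f, Continuous fun t => S t f) : Continuous fun p : T × E => S p.1 p.2 := by
  refine continuous_iff_continuousAt.2 fun ⟨t₀, f₀⟩ => ?_
  obtain ⟨K, hK, hKt₀⟩ := exists_compact_mem_nhds t₀
  obtain ⟨M, hM⟩ := hK.exists_bound_opNorm_of_continuous_apply hS
  rw [ContinuousAt, tendsto_iff_norm_sub_tendsto_zero]
  refine squeeze_zero' (Eventually.of_forall fun _ => norm_nonneg _)
    (g := fun p => M * ‖p.2 - f₀‖ + ‖S p.1 f₀ - S t₀ f₀‖) ?_ ?_
  · filter_upwards [continuous_fst.continuousAt.preimage_mem_nhds hKt₀] with p hp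
    calc ‖S p.1 p.2 - S t₀ f₀‖ = ‖S p.1 (p.2 - f₀) + (S p.1 f₀ - S t₀ f₀)‖ := by
          rw [map_sub, sub_add_sub_cancel]
      _ ≤ ‖S p.1 (p.2 - f₀)‖ + ‖S p.1 f₀ - S t₀ f₀‖ := norm_add_le _ _
      _ ≤ M * ‖p.2 - f₀‖ + ‖S p.1 f₀ - S t₀ f₀‖ := by
          gcongr; exact (S p.1).le_of_opNorm_le (hM _ hp) _
  · have : Continuous fun p : T × E => M * ‖p.2 - f₀‖ + ‖S p.1 f₀ - S t₀ f₀‖ := by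
      have := hS f₀; fun_prop
    simpa using this.tendsto (t₀, f₀)

end StronglyContinuousFamily

theorem continuous_eval_of_continuous_shift {T E α : Type*} [TopologicalSpace T]
    [WeaklyLocallyCompactSpace T] [AddZeroClass T] [NormedAddCommGroup E] [NormedSpace ℝ E]
    [CompleteSpace E] [TopologicalSpace α] (ι : E → T → α) (hι : Continuous fun f => ι f 0)
    (S : T → E →L[ℝ] E) (hshift : ∀ h f x, ι (S h f) x = ι f (x + h))
    (hS : ∀ f, Continuous fun h => S h f) :
    Continuous fun p : E × T => ι p.1 p.2 :=
  (hι.comp ((continuous_uncurry_of_continuous_apply hS).comp continuous_swap)).congr fun p => by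
    simp [hshift]

noncomputable def intervalIntegralCLM {E : Type*} [NormedAddCommGroup E] [NormedSpace ℝ E]
    (φ : E →ₗ[ℝ] ℝ → ℝ) (hφ : Continuous (Function.uncurry fun f s => φ f s)) (a b : ℝ) :
    E →L[ℝ] ℝ where
  toFun f := ∫ s in a..b, φ f s
  map_add' f f' := by
    simp only [map_add, Pi.add_apply]
    exact intervalIntegral.integral_add ((hφ.uncurry_left f).intervalIntegrable a b)
      ((hφ.uncurry_left f').intervalIntegrable a b)
  map_smul' c f := by
    simp only [map_smul, Pi.smul_apply, smul_eq_mul, intervalIntegral.integral_const_mul,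
      RingHom.id_apply]
  cont := intervalIntegral.continuous_parametric_intervalIntegral_of_continuous' hφ a b

theorem hasDerivAt_one_sub_exp_neg_integral {u : ℝ → ℝ} (hu : Continuous u) (a x : ℝ) :
    HasDerivAt (fun t => 1 - Real.exp (-∫ s in a..t, u s))
      (u x * Real.exp (-∫ s in a..x, u s)) x :=
  ((hu.integral_hasStrictDerivAt a x).hasDerivAt.neg.exp.const_sub 1).congr_deriv <| by
    rw [Pi.neg_apply]; ring

theorem stmt8_general
    {H : Type*} [NormedAddCommGroup H] [InnerProductSpace ℝ H]
    [CompleteSpace H]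
    (ι : H →ₗ[ℝ] (ℝ≥0 → ℝ))
    (hH1 : Continuous fun f : H => ι f 0)
    (S : ℝ≥0 → H →L[ℝ] H)
    (hshift : ∀ (h : ℝ≥0) (f : H) (x : ℝ≥0), ι (S h f) x = ι f (x + h))
    (hScont : ∀ f : H, Continuous fun h : ℝ≥0 => S h f)
    {d : ℕ} (U : Set (EuclideanSpace ℝ (Fin d)))
    (χ : EuclideanSpace ℝ (Fin d) → H) (hχ : ContDiffOn ℝ 2 χ U)
    (g : ℝ → EuclideanSpace ℝ (Fin d) → ℝ)
    (hg : ∀ (x : ℝ) (y : EuclideanSpace ℝ (Fin d)),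
      g x y = 1 - Real.exp (-∫ s in (0:ℝ)..x, ι (χ y) s.toNNReal)) :
    -- (i) g is jointly continuous on ℝ≥0 × U
    ContinuousOn (fun p : ℝ × EuclideanSpace ℝ (Fin d) => g p.1 p.2)
      (Set.Ici 0 ×ˢ U) ∧
    -- (ii) x ↦ g(x,y) is C¹ with ∂_x g(x,y) = (ι(χ y))(x)·(1 − g(x,y)),
    --      jointly continuous in (x,y)
    (∀ y ∈ U, ∀ x : ℝ, 0 ≤ x →
      HasDerivWithinAt (fun t : ℝ => g t y)
        (ι (χ y) x.toNNReal * (1 - g x y)) (Set.Ici 0) x) ∧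
    ContinuousOn (fun p : ℝ × EuclideanSpace ℝ (Fin d) =>
        ι (χ p.2) p.1.toNNReal * (1 - g p.1 p.2))
      (Set.Ici 0 ×ˢ U) ∧
    -- (iii) y ↦ g(x,y) is twice continuously differentiable on U
    (∀ x : ℝ, 0 ≤ x → ContDiffOn ℝ 2 (fun y => g x y) U) := by
  let φ : H →ₗ[ℝ] ℝ → ℝ := (LinearMap.funLeft ℝ ℝ Real.toNNReal).comp ι
  have hφ : Continuous (Function.uncurry fun f s => φ f s) :=
    (continuous_eval_of_continuous_shift ι hH1 S hshift hScont).comp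
      (continuous_fst.prodMk (continuous_real_toNNReal.comp continuous_snd))
  have hG : Continuous fun p : H × ℝ => 1 - Real.exp (-∫ s in (0:ℝ)..p.2, φ p.1 s) := by
    fun_prop
  have hχU : ContinuousOn (fun p : ℝ × EuclideanSpace ℝ (Fin d) => (χ p.2, p.1))
      (Set.Ici 0 ×ˢ U) :=
    (hχ.continuousOn.comp continuousOn_snd fun _ hp => hp.2).prodMk continuousOn_fst
  have hg_cont := (hG.comp_continuousOn hχU).congr fun p _ => hg p.1 p.2
  refine ⟨hg_cont, fun y _ x _ => ?_,
    (hφ.comp_continuousOn hχU).mul (continuousOn_const.sub hg_cont), fun x _ => ?_⟩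
  · simp only [hg, sub_sub_cancel]
    exact (hasDerivAt_one_sub_exp_neg_integral (hφ.uncurry_left (χ y)) 0 x).hasDerivWithinAt
  · exact ((contDiff_const.sub (Real.contDiff_exp.comp
      (intervalIntegralCLM φ hφ 0 x).contDiff.neg)).comp_contDiffOn hχ).congr fun y _ => hg x y

theorem stmt8
    {H : Type*} [NormedAddCommGroup H] [InnerProductSpace ℝ H]
    [CompleteSpace H] [TopologicalSpace.SeparableSpace H]
    (ι : H →ₗ[ℝ] (ℝ≥0 → ℝ)) (hι : Function.Injective ι)
    (hH1 : Continuous fun f : H => ι f 0)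
    (S : ℝ≥0 → H →L[ℝ] H)
    (hshift : ∀ (h : ℝ≥0) (f : H) (x : ℝ≥0), ι (S h f) x = ι f (x + h))
    (hS0 : S 0 = ContinuousLinearMap.id ℝ H)
    (hSadd : ∀ a b : ℝ≥0, S (a + b) = (S a).comp (S b))
    (hScont : ∀ f : H, Continuous fun h : ℝ≥0 => S h f)
    {d : ℕ} (U : Set (EuclideanSpace ℝ (Fin d))) (hUopen : IsOpen U)
    (χ : EuclideanSpace ℝ (Fin d) → H) (hχ : ContDiffOn ℝ 2 χ U)
    (g : ℝ → EuclideanSpace ℝ (Fin d) → ℝ)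
    (hg : ∀ (x : ℝ) (y : EuclideanSpace ℝ (Fin d)),
      g x y = 1 - Real.exp (-∫ s in (0:ℝ)..x, ι (χ y) s.toNNReal)) :
    -- (i) g is jointly continuous on ℝ≥0 × U
    ContinuousOn (fun p : ℝ × EuclideanSpace ℝ (Fin d) => g p.1 p.2)
      (Set.Ici 0 ×ˢ U) ∧
    -- (ii) x ↦ g(x,y) is C¹ with ∂_x g(x,y) = (ι(χ y))(x)·(1 − g(x,y)),
    --      jointly continuous in (x,y)
    (∀ y ∈ U, ∀ x : ℝ, 0 ≤ x →
      HasDerivWithinAt (fun t : ℝ => g t y)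
        (ι (χ y) x.toNNReal * (1 - g x y)) (Set.Ici 0) x) ∧
    ContinuousOn (fun p : ℝ × EuclideanSpace ℝ (Fin d) =>
        ι (χ p.2) p.1.toNNReal * (1 - g p.1 p.2))
      (Set.Ici 0 ×ˢ U) ∧
    -- (iii) y ↦ g(x,y) is twice continuously differentiable on U
    (∀ x : ℝ, 0 ≤ x → ContDiffOn ℝ 2 (fun y => g x y) U) :=
  stmt8_general ι hH1 S hshift hScont U χ hχ g hg
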